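/- Let f = f₁⊘f₀ be a nonconstant tropical meromorphic function with reduced representation f = [f₀:f₁] and limsup_{r→∞} (log T_f(r))/r = 0, and let a₁,…,a_q be distinct real numbers such that f⊕a_j ≢ a_j for each j, with associated tropical linear polynomials P_j(x₀,x₁) = max(a_j+x₀, x₁), so that (P_j∘f)(x) = max(a_j+f₀(x), f₁(x)). Then q·T_f(r) = ∑_{j=1}^q N(r, 1₀⊘(P_j∘f)) + o(T_f(r)) as r → ∞ outside a set of zero upper density. -/

import Mathlib

open Filter MeasureTheory Topology
open scoped Classical

noncomputable section

namespace TropNev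

/-- `f` is tropical meromorphic: continuous and piecewise linear
(affine on a small interval on each side of every point). -/
def IsTropMero (f : ℝ → ℝ) : Prop :=
  Continuous f ∧ ∀ x : ℝ, ∃ ε > (0:ℝ), ∃ sR sL : ℝ,
    (∀ t ∈ Set.Icc x (x + ε), f t = f x + sR * (t - x)) ∧
    (∀ t ∈ Set.Icc (x - ε) x, f t = f x + sL * (t - x))

/-- ω_f(x): right derivative minus left derivative. -/
def omega (f : ℝ → ℝ) (x : ℝ) : ℝ :=
  derivWithin f (Set.Ici x) x - derivWithin f (Set.Iic x) x

/-- tropical entire: tropical meromorphic with no poles. -/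
def IsTropEntire (f : ℝ → ℝ) : Prop :=
  IsTropMero f ∧ ∀ x : ℝ, 0 ≤ omega f x

/-- tropical proximity function m(r,f). -/
def prox (f : ℝ → ℝ) (r : ℝ) : ℝ := (max (f r) 0 + max (f (-r)) 0) / 2

/-- tropical counting function of poles N(r,f). -/
def countN (f : ℝ → ℝ) (r : ℝ) : ℝ :=
  (1 / 2) * ∑' b : ℝ, if |b| < r ∧ omega f b < 0 then -omega f b * (r - |b|) else 0

/-- N(r, 1₀ ⊘ g): counting function of the roots of g. -/
def countNroots (g : ℝ → ℝ) (r : ℝ) : ℝ := countN (fun x => -g x) r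

/-- tropical Nevanlinna characteristic T(r,f). -/
def charT (f : ℝ → ℝ) (r : ℝ) : ℝ := prox f r + countN f r

/-- limsup_{r→∞} h(r) = 0 (in the real-analysis sense). -/
def LimsupZero (h : ℝ → ℝ) : Prop :=
  (∀ ε : ℝ, 0 < ε → ∀ᶠ r : ℝ in atTop, h r < ε) ∧
  (∀ ε : ℝ, 0 < ε → ∃ᶠ r : ℝ in atTop, -ε < h r)

/-- liminf_{r→∞} h(r) = 0 (in the real-analysis sense). -/
def LiminfZero (h : ℝ → ℝ) : Prop :=
  (∀ ε : ℝ, 0 < ε → ∃ᶠ r : ℝ in atTop, h r < ε) ∧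
  (∀ ε : ℝ, 0 < ε → ∀ᶠ r : ℝ in atTop, -ε < h r)

/-- E ⊆ [1,∞) has zero upper density. -/
def ZeroUpperDensity (E : Set ℝ) : Prop :=
  LimsupZero fun r => (volume (E ∩ Set.Icc 1 r)).toReal / r

/-- E ⊆ [1,∞) has zero lower density. -/
def ZeroLowerDensity (E : Set ℝ) : Prop :=
  LiminfZero fun r => (volume (E ∩ Set.Icc 1 r)).toReal / r

/-- max of finitely many reals. -/
def tmax {m : ℕ} (F : Fin (m + 1) → ℝ) : ℝ :=
  Finset.univ.sup' Finset.univ_nonempty F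

/-- tropical holomorphic curve with reduced representation f₀,…,f_n :
all components tropical entire, with no common roots. -/
def IsTropCurve {n : ℕ} (f : Fin (n + 1) → ℝ → ℝ) : Prop :=
  (∀ k, IsTropEntire (f k)) ∧ ∀ x : ℝ, ∃ k, ¬ 0 < omega (f k) x

/-- tropical Cartan characteristic T_f(r). -/
def curveT {n : ℕ} (f : Fin (n + 1) → ℝ → ℝ) (r : ℝ) : ℝ :=
  (tmax (fun k => f k r) + tmax (fun k => f k (-r))) / 2 - tmax fun k => f k 0

/-- homogeneous tropical polynomial of degree d in the variables x₀,…,x_n,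
with coefficients in ℝ ∪ {−∞} indexed by the degree-d monomials
(i.e. multisets of size d over the variables), not all −∞. -/
structure TropPoly (n d : ℕ) where
  coeff : Sym (Fin (n + 1)) d → EReal
  nontriv : ∃ s, coeff s ≠ ⊥

/-- value of the monomial term c_I + i₀x₀+⋯+i_nx_n. -/
def TropPoly.term {n d : ℕ} (P : TropPoly n d) (s : Sym (Fin (n + 1)) d)
    (x : Fin (n + 1) → ℝ) : EReal :=
  P.coeff s + (((Multiset.map x (s : Multiset (Fin (n + 1)))).sum : ℝ) : EReal)

def TropPoly.evalE {n d : ℕ} (P : TropPoly n d) (x : Fin (n + 1) → ℝ) : EReal :=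
  Finset.univ.sup fun s => P.term s x

/-- the tropical hypersurface V_P : points where the maximum is attained
by at least two monomials. -/
def TropPoly.hyp {n d : ℕ} (P : TropPoly n d) : Set (Fin (n + 1) → ℝ) :=
  {x | ∃ s t : Sym (Fin (n + 1)) d, s ≠ t ∧
        P.term s x = P.evalE x ∧ P.term t x = P.evalE x}

/-- the composition P ∘ f. -/
def TropPoly.compo {n d : ℕ} (P : TropPoly n d) (f : Fin (n + 1) → ℝ → ℝ) : ℝ → ℝ :=
  fun t => (P.evalE fun k => f k t).toReal

/-- ‖a‖ = max_I c_I for the coefficient vector of P. -/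
def TropPoly.coeffNorm {n d : ℕ} (P : TropPoly n d) : ℝ :=
  (Finset.univ.sup fun s => P.coeff s).toReal

/-- tropical Weil function λ_{V_P}(f(x)) = d‖f(x)‖ + d‖a‖ − (P∘f)(x). -/
def weil {n d : ℕ} (P : TropPoly n d) (f : Fin (n + 1) → ℝ → ℝ) (x : ℝ) : ℝ :=
  d * tmax (fun k => f k x) + d * P.coeffNorm - P.compo f x

/-- proximity function m_f(r, V_P). -/
def proxCurve {n d : ℕ} (f : Fin (n + 1) → ℝ → ℝ) (P : TropPoly n d) (r : ℝ) : ℝ :=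
  (weil P f r + weil P f (-r)) / 2

/-- f is tropical algebraically nondegenerate. -/
def AlgNondeg {n : ℕ} (f : Fin (n + 1) → ℝ → ℝ) : Prop :=
  ∀ d : ℕ, 1 ≤ d → ∀ P : TropPoly n d, ∃ t : ℝ, (fun k => f k t) ∉ P.hyp

/-- f is tropical linearly nondegenerate. -/
def LinNondeg {n : ℕ} (f : Fin (n + 1) → ℝ → ℝ) : Prop :=
  ∀ P : TropPoly n 1, ∃ t : ℝ, (fun k => f k t) ∉ P.hyp

/-- Gondran–Minoux linear independence of a finite family of real functions. -/
def GMLinIndep {ι : Type*} [Fintype ι] [DecidableEq ι] (g : ι → ℝ → ℝ) : Prop :=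
  ¬ ∃ (I J : Finset ι) (a : ι → EReal),
      I.Nonempty ∧ J.Nonempty ∧ Disjoint I J ∧ I ∪ J = Finset.univ ∧
      (∃ i, a i ≠ ⊥) ∧
      ∀ x : ℝ, (I.sup fun i => a i + ((g i x : ℝ) : EReal)) =
        (J.sup fun j => a j + ((g j x : ℝ) : EReal))

/-- the degree-d tropical monomials f^I in f₀,…,f_n. -/
def monos {n : ℕ} (f : Fin (n + 1) → ℝ → ℝ) (d : ℕ) :
    Sym (Fin (n + 1)) d → ℝ → ℝ :=
  fun s x => (Multiset.map (fun k => f k x) (s : Multiset (Fin (n + 1)))).sum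

/-- Gondran–Minoux algebraic independence. -/
def GMAlgIndep {n : ℕ} (f : Fin (n + 1) → ℝ → ℝ) : Prop :=
  ∀ d : ℕ, 1 ≤ d → GMLinIndep (monos f d)

/-- F is a complete tropical linear combination of the family h :
every tropical-linear representation of F over h has all coefficients finite. -/
def TropComplete {ι : Type*} [Fintype ι] (h : ι → ℝ → ℝ) (F : ℝ → ℝ) : Prop :=
  ∀ a : ι → EReal,
    (∀ x : ℝ, ((F x : ℝ) : EReal) = Finset.univ.sup fun k => a k + ((h k x : ℝ) : EReal)) →
    ∀ k, a k ≠ ⊥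

/-- the tropical Casoratian with shift c. -/
def casorati {m : ℕ} (c : ℝ) (g : Fin (m + 1) → ℝ → ℝ) : ℝ → ℝ := fun x =>
  Finset.univ.sup' Finset.univ_nonempty
    fun π : Equiv.Perm (Fin (m + 1)) => ∑ j, g j (x + ((π j : ℕ) : ℝ) * c)

/-- tropical Cartan characteristic for a reduced representation [f₀:f₁] in TP¹. -/
def charT2 (f0 f1 : ℝ → ℝ) (r : ℝ) : ℝ :=
  (max (f0 r) (f1 r) + max (f0 (-r)) (f1 (-r))) / 2 - max (f0 0) (f1 0)

/-- reduced representation in TP¹: f₀, f₁ tropical entire with no common roots. -/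
def ReducedPair (f0 f1 : ℝ → ℝ) : Prop :=
  IsTropEntire f0 ∧ IsTropEntire f1 ∧ ∀ x : ℝ, ¬ (0 < omega f0 x ∧ 0 < omega f1 x)

/-- (P∘f)(x) = max(a₀+f₀(x), a₁+f₁(x)) for a TP¹ value [a₁:a₀]. -/
def pcomp (a0 a1 : EReal) (f0 f1 : ℝ → ℝ) : ℝ → ℝ := fun x =>
  ((a0 + ((f0 x : ℝ) : EReal)) ⊔ (a1 + ((f1 x : ℝ) : EReal))).toReal

/-- defect of a tropical holomorphic curve with respect to a tropical hypersurface. -/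
def curveDefect {n d : ℕ} (f : Fin (n + 1) → ℝ → ℝ) (P : TropPoly n d) : ℝ :=
  1 - Filter.limsup (fun r => countNroots (P.compo f) r / (d * curveT f r)) atTop

end TropNev

end

open TropNev Filter MeasureTheory Topology

/-!
For a tropical entire `g` and `r > 0`, Jensen's formula gives
`N(r, 1₀ ⊘ g) = (g r + g (-r)) / 2 - g 0`: subtracting from `g` the hinges
`ω_g(b) · max (t - b) 0` at its finitely many breakpoints `b ∈ (-r, r)` leaves a function
affine on `[-r, r]`. The characteristic `T_f(r)` is this expression for `max f₀ f₁`, and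
`P_j ∘ f` differs from `max f₀ f₁` by at most `|a_j|` everywhere, so each counting function
`N(r, 1₀ ⊘ (P_j ∘ f))` is `T_f(r) + O(1)`. As `f` is nonconstant, `max f₀ f₁` has a root, hence
`T_f(r) → ∞` and the bounded error is `o(T_f(r))`, with a bounded exceptional set.
-/

open Set

namespace TropNev

variable {f g : ℝ → ℝ} {x : ℝ}

lemma hasDerivWithinAt_of_eventually_affine {S : Set ℝ} {c : ℝ}
    (hf : ∀ᶠ t in 𝓝[S] x, f t = f x + c * (t - x)) : HasDerivWithinAt f c S x := by
  have : HasDerivWithinAt (fun t => f x + c * (t - x)) c S x := by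
    simpa using (((hasDerivWithinAt_id x S).sub_const x).const_mul c).const_add (f x)
  exact this.congr_of_eventuallyEq hf (by simp)

lemma omega_eq_of_eventually_affine {sR sL : ℝ}
    (hR : ∀ᶠ t in 𝓝[≥] x, f t = f x + sR * (t - x))
    (hL : ∀ᶠ t in 𝓝[≤] x, f t = f x + sL * (t - x)) : omega f x = sR - sL := by
  rw [omega, (hasDerivWithinAt_of_eventually_affine hR).derivWithin (uniqueDiffWithinAt_Ici x),
    (hasDerivWithinAt_of_eventually_affine hL).derivWithin (uniqueDiffWithinAt_Iic x)]

lemma omega_eq_zero_of_eventually_eq_affine {A c : ℝ} (hf : ∀ᶠ t in 𝓝 x, f t = A + c * t) :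
    omega f x = 0 := by
  have hx : ∀ᶠ t in 𝓝 x, f t = f x + c * (t - x) :=
    hf.mono fun t ht => by rw [ht, hf.self_of_nhds]; ring
  rw [omega_eq_of_eventually_affine (hx.filter_mono nhdsWithin_le_nhds)
    (hx.filter_mono nhdsWithin_le_nhds), sub_self]

lemma isTropMero_iff : IsTropMero f ↔ Continuous f ∧ ∀ x, ∃ sR sL : ℝ,
    (∀ᶠ t in 𝓝[≥] x, f t = f x + sR * (t - x)) ∧
      ∀ᶠ t in 𝓝[≤] x, f t = f x + sL * (t - x) := by
  refine and_congr_right fun _ => forall_congr' fun x => ⟨?_, ?_⟩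
  · rintro ⟨ε, hε, sR, sL, hR, hL⟩
    exact ⟨sR, sL, mem_of_superset (Icc_mem_nhdsGE (by linarith)) hR,
      mem_of_superset (Icc_mem_nhdsLE (by linarith)) hL⟩
  · rintro ⟨sR, sL, hR, hL⟩
    obtain ⟨u, hxu, huR⟩ := mem_nhdsGE_iff_exists_Icc_subset.1 hR
    obtain ⟨l, hlx, hlL⟩ := mem_nhdsLE_iff_exists_Icc_subset.1 hL
    refine ⟨min (u - x) (x - l), lt_min (by linarith) (by linarith), sR, sL,
      fun t ht => huR ⟨ht.1, ?_⟩, fun t ht => hlL ⟨?_, ht.2⟩⟩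
    · linarith [ht.2, min_le_left (u - x) (x - l)]
    · linarith [ht.1, min_le_right (u - x) (x - l)]

lemma isTropEntire_iff : IsTropEntire f ↔ Continuous f ∧ ∀ x, ∃ sR sL : ℝ, sL ≤ sR ∧
    (∀ᶠ t in 𝓝[≥] x, f t = f x + sR * (t - x)) ∧
      ∀ᶠ t in 𝓝[≤] x, f t = f x + sL * (t - x) := by
  constructor
  · rintro ⟨hf, hω⟩
    refine ⟨hf.1, fun x => ?_⟩
    obtain ⟨sR, sL, hR, hL⟩ := (isTropMero_iff.1 hf).2 x
    exact ⟨sR, sL, by linarith [hω x, omega_eq_of_eventually_affine hR hL], hR, hL⟩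
  · rintro ⟨hc, hs⟩
    refine ⟨isTropMero_iff.2 ⟨hc, fun x => ?_⟩, fun x => ?_⟩ <;>
      obtain ⟨sR, sL, hsl, hR, hL⟩ := hs x
    · exact ⟨sR, sL, hR, hL⟩
    · rw [omega_eq_of_eventually_affine hR hL]
      linarith

lemma IsTropMero.differentiableWithinAt_Ici (hf : IsTropMero f) (x : ℝ) :
    DifferentiableWithinAt ℝ f (Ici x) x := by
  obtain ⟨sR, -, hR, -⟩ := (isTropMero_iff.1 hf).2 x
  exact (hasDerivWithinAt_of_eventually_affine hR).differentiableWithinAt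

lemma IsTropMero.differentiableWithinAt_Iic (hf : IsTropMero f) (x : ℝ) :
    DifferentiableWithinAt ℝ f (Iic x) x := by
  obtain ⟨-, sL, -, hL⟩ := (isTropMero_iff.1 hf).2 x
  exact (hasDerivWithinAt_of_eventually_affine hL).differentiableWithinAt

def tropMero : Submodule ℝ (ℝ → ℝ) where
  carrier := {f | IsTropMero f}
  add_mem' {f g} hf hg := by
    refine isTropMero_iff.2 ⟨hf.1.add hg.1, fun x => ?_⟩
    obtain ⟨sRf, sLf, hRf, hLf⟩ := (isTropMero_iff.1 hf).2 x
    obtain ⟨sRg, sLg, hRg, hLg⟩ := (isTropMero_iff.1 hg).2 x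
    refine ⟨sRf + sRg, sLf + sLg, ?_, ?_⟩
    · filter_upwards [hRf, hRg] with t h1 h2
      simp only [Pi.add_apply, h1, h2]; ring
    · filter_upwards [hLf, hLg] with t h1 h2
      simp only [Pi.add_apply, h1, h2]; ring
  zero_mem' :=
    isTropMero_iff.2 ⟨continuous_const, fun _ => ⟨0, 0, by simp, by simp⟩⟩
  smul_mem' c f hf := by
    refine isTropMero_iff.2 ⟨hf.1.const_smul c, fun x => ?_⟩
    obtain ⟨sR, sL, hR, hL⟩ := (isTropMero_iff.1 hf).2 x
    refine ⟨c * sR, c * sL, hR.mono fun t ht => ?_, hL.mono fun t ht => ?_⟩ <;>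
      simp only [Pi.smul_apply, smul_eq_mul, ht] <;> ring

lemma omega_sub (hf : IsTropMero f) (hg : IsTropMero g) (x : ℝ) :
    omega (f - g) x = omega f x - omega g x := by
  simp only [omega]
  rw [derivWithin_sub (hf.differentiableWithinAt_Ici x) (hg.differentiableWithinAt_Ici x),
    derivWithin_sub (hf.differentiableWithinAt_Iic x) (hg.differentiableWithinAt_Iic x)]
  ring

lemma omega_const_smul (c : ℝ) (hf : IsTropMero f) (x : ℝ) :
    omega (c • f) x = c * omega f x := by
  simp only [omega]
  rw [derivWithin_const_smul c (hf.differentiableWithinAt_Ici x),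
    derivWithin_const_smul c (hf.differentiableWithinAt_Iic x), smul_eq_mul, smul_eq_mul]
  ring

lemma omega_sum {ι : Type*} {s : Finset ι} {F : ι → ℝ → ℝ} (hF : ∀ i ∈ s, IsTropMero (F i))
    (x : ℝ) : omega (∑ i ∈ s, F i) x = ∑ i ∈ s, omega (F i) x := by
  simp only [omega]
  rw [derivWithin_sum fun i hi => (hF i hi).differentiableWithinAt_Ici x,
    derivWithin_sum fun i hi => (hF i hi).differentiableWithinAt_Iic x, Finset.sum_sub_distrib]

lemma omega_neg (f : ℝ → ℝ) (x : ℝ) : omega (fun y => -f y) x = -omega f x := by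
  simp only [omega]
  rw [show (fun y => -f y) = -f from rfl, derivWithin.neg, derivWithin.neg]
  ring

def hinge (b : ℝ) : ℝ → ℝ := fun t => max (t - b) 0

lemma hinge_eventually_right (b x : ℝ) :
    ∀ᶠ t in 𝓝[≥] x, hinge b t = hinge b x + (if b ≤ x then 1 else 0) * (t - x) := by
  split_ifs with hbx
  · filter_upwards [self_mem_nhdsWithin] with t (ht : x ≤ t)
    simp only [hinge, max_eq_left (sub_nonneg.2 hbx), max_eq_left (by linarith : 0 ≤ t - b)]
    ring
  · filter_upwards [(eventually_lt_nhds (not_le.1 hbx)).filter_mono nhdsWithin_le_nhds] with t ht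
    simp only [hinge, max_eq_right (by linarith : t - b ≤ 0),
      max_eq_right (by linarith : x - b ≤ 0)]
    ring

lemma hinge_eventually_left (b x : ℝ) :
    ∀ᶠ t in 𝓝[≤] x, hinge b t = hinge b x + (if b < x then 1 else 0) * (t - x) := by
  split_ifs with hbx
  · filter_upwards [(eventually_gt_nhds hbx).filter_mono nhdsWithin_le_nhds] with t ht
    simp only [hinge, max_eq_left (by linarith : 0 ≤ t - b), max_eq_left (by linarith : 0 ≤ x - b)]
    ring
  · filter_upwards [self_mem_nhdsWithin] with t (ht : t ≤ x)
    simp only [hinge, max_eq_right (by linarith : t - b ≤ 0),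
      max_eq_right (by linarith : x - b ≤ 0)]
    ring

lemma isTropMero_hinge (b : ℝ) : IsTropMero (hinge b) :=
  isTropMero_iff.2 ⟨(continuous_id.sub continuous_const).max continuous_const,
    fun x => ⟨_, _, hinge_eventually_right b x, hinge_eventually_left b x⟩⟩

lemma omega_hinge (b x : ℝ) : omega (hinge b) x = if x = b then 1 else 0 := by
  rw [omega_eq_of_eventually_affine (hinge_eventually_right b x) (hinge_eventually_left b x)]
  rcases lt_trichotomy x b with hxb | rfl | hxb
  · simp [hxb.ne, not_le.2 hxb, not_lt.2 hxb.le]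
  · simp
  · simp [hxb.ne', hxb.le, hxb]

lemma hinge_add_hinge_neg_sub {b r : ℝ} (hb : |b| < r) :
    hinge b r + hinge b (-r) - 2 * hinge b 0 = r - |b| := by
  obtain ⟨hrb, hbr⟩ := abs_lt.1 hb
  simp only [hinge, max_eq_left (by linarith : 0 ≤ r - b), max_eq_right (by linarith : -r - b ≤ 0)]
  rcases le_total 0 b with h0 | h0
  · rw [max_eq_right (by linarith : 0 - b ≤ 0), abs_of_nonneg h0]; ring
  · rw [max_eq_left (by linarith : 0 ≤ 0 - b), abs_of_nonpos h0]; ring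

lemma IsTropMero.eventually_omega_eq_zero (hf : IsTropMero f) (y : ℝ) :
    ∀ᶠ z in 𝓝[≠] y, omega f z = 0 := by
  have side : ∀ {S : Set ℝ}, IsOpen S → ∀ c : ℝ, (∀ᶠ t in 𝓝[S] y, f t = f y + c * (t - y)) →
      ∀ᶠ z in 𝓝[S] y, omega f z = 0 := by
    intro S hS c hc
    filter_upwards [eventually_eventually_nhdsWithin.2 hc, self_mem_nhdsWithin] with z hz hzS
    rw [hS.nhdsWithin_eq hzS] at hz
    exact omega_eq_zero_of_eventually_eq_affine (A := f y - c * y) (c := c)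
      (hz.mono fun t ht => by rw [ht]; ring)
  obtain ⟨sR, sL, hR, hL⟩ := (isTropMero_iff.1 hf).2 y
  rw [← nhdsLT_sup_nhdsGT, eventually_sup]
  exact ⟨side isOpen_Iio sL (hL.filter_mono (nhdsWithin_mono _ Iio_subset_Iic_self)),
    side isOpen_Ioi sR (hR.filter_mono (nhdsWithin_mono _ Ioi_subset_Ici_self))⟩

lemma IsTropMero.finite_breaks (hf : IsTropMero f) {K : Set ℝ} (hK : IsCompact K) :
    {x ∈ K | omega f x ≠ 0}.Finite := by
  by_contra hinf
  obtain ⟨y, -, hy⟩ := Set.Infinite.exists_accPt_of_subset_isCompact hinf hK fun _ hx => hx.1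
  obtain ⟨z, hz, hz0⟩ :=
    ((accPt_iff_frequently_nhdsNE.1 hy).and_eventually (hf.eventually_omega_eq_zero y)).exists
  exact hz.2 hz0

lemma IsTropMero.exists_finset_breaks (hf : IsTropMero f) (r : ℝ) :
    ∃ B : Finset ℝ, ∀ b, b ∈ B ↔ |b| < r ∧ omega f b ≠ 0 := by
  have hfin : {b | |b| < r ∧ omega f b ≠ 0}.Finite :=
    (hf.finite_breaks (isCompact_Icc (a := -r) (b := r))).subset fun b hb =>
      ⟨⟨(abs_lt.1 hb.1).1.le, (abs_lt.1 hb.1).2.le⟩, hb.2⟩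
  exact ⟨hfin.toFinset, fun b => hfin.mem_toFinset⟩

lemma IsTropMero.hasDerivAt_deriv_of_omega_eq_zero (hf : IsTropMero f) (hx : omega f x = 0) :
    HasDerivAt f (deriv f x) x ∧ HasDerivAt (deriv f) 0 x := by
  obtain ⟨sR, sL, hR, hL⟩ := (isTropMero_iff.1 hf).2 x
  have hslope : sL = sR := by linarith [omega_eq_of_eventually_affine hR hL]
  have haff : ∀ᶠ t in 𝓝 x, f t = f x + sR * (t - x) := by
    rw [← nhdsLE_sup_nhdsGE, eventually_sup]
    exact ⟨hslope ▸ hL, hR⟩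
  have hderiv : ∀ᶠ y in 𝓝 x, HasDerivAt f sR y := haff.eventually_nhds.mono fun y hy => by
    have : HasDerivAt (fun t => f x + sR * (t - x)) sR y := by
      simpa using (((hasDerivAt_id y).sub_const x).const_mul sR).const_add (f x)
    exact this.congr_of_eventuallyEq hy
  have hconst : deriv f =ᶠ[𝓝 x] fun _ => sR := hderiv.mono fun y hy => hy.deriv
  exact ⟨hderiv.self_of_nhds.differentiableAt.hasDerivAt,
    (hasDerivAt_const x sR).congr_of_eventuallyEq hconst⟩

lemma IsTropMero.exists_affine_on_Icc (hf : IsTropMero f) {u v : ℝ} (huv : u < v)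
    (hω : ∀ x ∈ Ioo u v, omega f x = 0) : ∃ c, ∀ t ∈ Icc u v, f t = f u + c * (t - u) := by
  have hd := fun x hx => hf.hasDerivAt_deriv_of_omega_eq_zero (hω x hx)
  have hm : (u + v) / 2 ∈ Ioo u v := ⟨by linarith, by linarith⟩
  have hconst : ∀ x ∈ Ioo u v, deriv f x = deriv f ((u + v) / 2) := fun x hx =>
    isOpen_Ioo.is_const_of_deriv_eq_zero isPreconnected_Ioo
      (fun y hy => (hd y hy).2.differentiableAt.differentiableWithinAt)
      (fun y hy => (hd y hy).2.deriv) hx hm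
  refine ⟨deriv f ((u + v) / 2), fun t ht => ?_⟩
  rcases ht.1.eq_or_lt with rfl | hut
  · ring
  obtain ⟨c, hc, hslope⟩ := exists_hasDerivAt_eq_slope f (deriv f) hut hf.1.continuousOn
    fun y hy => (hd y ⟨hy.1, hy.2.trans_le ht.2⟩).1
  rw [hconst c ⟨hc.1, hc.2.trans_le ht.2⟩, eq_div_iff (sub_ne_zero.2 hut.ne')] at hslope
  linarith

lemma IsTropMero.eq_affine_of_omega_eq_zero (hf : IsTropMero f) (hω : ∀ x, omega f x = 0) (x : ℝ) :
    f x = f 0 + deriv f 0 * x := by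
  have hd := fun y => hf.hasDerivAt_deriv_of_omega_eq_zero (hω y)
  have hconst : ∀ y, deriv f y = deriv f 0 := fun y =>
    is_const_of_deriv_eq_zero (fun z => (hd z).2.differentiableAt) (fun z => (hd z).2.deriv) y 0
  have hlin : ∀ y, HasDerivAt (fun t => f t - deriv f 0 * t) 0 y := fun y => by
    have := (hd y).1.sub ((hasDerivAt_id y).const_mul (deriv f 0))
    rwa [hconst y, mul_one, sub_self] at this
  have := is_const_of_deriv_eq_zero (fun y => (hlin y).differentiableAt)
    (fun y => (hlin y).deriv) x 0
  simp only [mul_zero, sub_zero] at this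
  linarith

theorem IsTropMero.sum_omega_mul_eq (hf : IsTropMero f) {r : ℝ} (hr : 0 < r) {B : Finset ℝ}
    (hB : ∀ b, b ∈ B ↔ |b| < r ∧ omega f b ≠ 0) :
    ∑ b ∈ B, omega f b * (r - |b|) = f r + f (-r) - 2 * f 0 := by
  set φ := f - ∑ b ∈ B, omega f b • hinge b
  have hterm : ∀ b ∈ B, IsTropMero (omega f b • hinge b) := fun b _ =>
    tropMero.smul_mem _ (isTropMero_hinge b)
  have hφ : IsTropMero φ := tropMero.sub_mem hf (tropMero.sum_mem hterm)
  have hωφ : ∀ x ∈ Ioo (-r) r, omega φ x = 0 := by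
    intro x hx
    rw [omega_sub hf (tropMero.sum_mem hterm), omega_sum hterm]
    simp only [omega_const_smul _ (isTropMero_hinge _), omega_hinge, mul_ite, mul_one, mul_zero,
      Finset.sum_ite_eq, hB, abs_lt]
    split_ifs with h
    · ring
    · exact sub_eq_zero.2 (not_not.1 fun h' => h ⟨hx, h'⟩)
  obtain ⟨c, hc⟩ := hφ.exists_affine_on_Icc (by linarith) hωφ
  have hmid : φ r + φ (-r) - 2 * φ 0 = 0 := by
    rw [hc r ⟨by linarith, le_rfl⟩, hc 0 ⟨by linarith, hr.le⟩, hc (-r) ⟨le_rfl, by linarith⟩]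
    ring
  have hsum : ∑ b ∈ B, omega f b * (r - |b|) =
      ∑ b ∈ B, omega f b * (hinge b r + hinge b (-r) - 2 * hinge b 0) :=
    Finset.sum_congr rfl fun b hb => by rw [hinge_add_hinge_neg_sub ((hB b).1 hb).1]
  simp only [φ, Pi.sub_apply, Finset.sum_apply, Pi.smul_apply, smul_eq_mul] at hmid
  rw [hsum]
  simp only [mul_sub, mul_add, Finset.sum_sub_distrib, Finset.sum_add_distrib,
    mul_left_comm _ (2 : ℝ), ← Finset.mul_sum]
  linarith

lemma IsTropEntire.two_mul_countNroots (he : IsTropEntire f) {r : ℝ} {B : Finset ℝ}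
    (hB : ∀ b, b ∈ B ↔ |b| < r ∧ omega f b ≠ 0) :
    2 * countNroots f r = ∑ b ∈ B, omega f b * (r - |b|) := by
  have hterm : ∀ b, (if |b| < r ∧ omega (fun x => -f x) b < 0 then
      -omega (fun x => -f x) b * (r - |b|) else 0) =
      if b ∈ B then omega f b * (r - |b|) else 0 := fun b => by
    simp only [omega_neg, neg_neg, neg_lt_zero, hB, (he.2 b).lt_iff_ne']
  rw [countNroots, countN, funext hterm, tsum_eq_sum fun b hb => if_neg hb,
    Finset.sum_congr rfl fun b hb => if_pos hb]
  ring

theorem IsTropEntire.countNroots_eq (he : IsTropEntire f) {r : ℝ} (hr : 0 < r) :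
    countNroots f r = (f r + f (-r)) / 2 - f 0 := by
  obtain ⟨B, hB⟩ := he.1.exists_finset_breaks r
  have := he.two_mul_countNroots hB
  rw [he.1.sum_omega_mul_eq hr hB] at this
  linarith

lemma IsTropEntire.tendsto_countNroots_atTop (he : IsTropEntire f) {b : ℝ} (hb : 0 < omega f b) :
    Tendsto (countNroots f) atTop atTop := by
  refine tendsto_atTop_mono' _ ?_
    (((tendsto_atTop_add_const_right _ (-|b|) tendsto_id).const_mul_atTop hb).atTop_div_const
      two_pos)
  filter_upwards [eventually_gt_atTop |b|] with r hr
  obtain ⟨B, hB⟩ := he.1.exists_finset_breaks r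
  have hle := Finset.single_le_sum (f := fun c => omega f c * (r - |c|))
    (fun c hc => mul_nonneg (he.2 c) (by linarith [((hB c).1 hc).1])) ((hB b).2 ⟨hr, hb.ne'⟩)
  have := he.two_mul_countNroots hB
  simp only [id]
  linarith

lemma IsTropEntire.eq_const_of_le (he : IsTropEntire f) {C : ℝ} (hC : ∀ x, f x ≤ C) (x : ℝ) :
    f x = f 0 := by
  have hω : ∀ b, omega f b = 0 := by
    intro b
    by_contra hb
    have hN := he.tendsto_countNroots_atTop ((he.2 b).lt_of_ne' hb)
    obtain ⟨r, hr, hr0⟩ := ((hN.eventually_gt_atTop (C - f 0)).and (eventually_gt_atTop 0)).exists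
    rw [he.countNroots_eq hr0] at hr
    linarith [hC r, hC (-r)]
  have haff := he.1.eq_affine_of_omega_eq_zero hω
  have hslope : deriv f 0 = 0 := by
    by_contra hs
    have := hC ((C - f 0 + 1) / deriv f 0)
    rw [haff, mul_div_cancel₀ _ hs] at this
    linarith
  rw [haff x, hslope]
  ring

lemma IsTropEntire.const_add (hf : IsTropEntire f) (c : ℝ) : IsTropEntire fun x => c + f x := by
  refine ⟨isTropMero_iff.2 ⟨continuous_const.add hf.1.1, fun x => ?_⟩, fun x => ?_⟩
  · obtain ⟨sR, sL, hR, hL⟩ := (isTropMero_iff.1 hf.1).2 x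
    exact ⟨sR, sL, hR.mono fun t ht => by rw [ht]; ring, hL.mono fun t ht => by rw [ht]; ring⟩
  · rw [omega, derivWithin_const_add, derivWithin_const_add]
    exact hf.2 x

lemma isTropEntire_max (hf : IsTropEntire f) (hg : IsTropEntire g) :
    IsTropEntire fun x => max (f x) (g x) := by
  refine isTropEntire_iff.2 ⟨hf.1.1.max hg.1.1, fun x => ?_⟩
  wlog hfg : f x ≤ g x generalizing f g
  · simpa only [max_comm] using this hg hf (le_of_not_ge hfg)
  obtain ⟨Rg, Lg, hLRg, hRg, hLg⟩ := (isTropEntire_iff.1 hg).2 x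
  rcases hfg.lt_or_eq with hlt | heq
  · have hmax : ∀ᶠ t in 𝓝 x, max (f t) (g t) = g t :=
      (hf.1.1.continuousAt.eventually_lt hg.1.1.continuousAt hlt).mono fun _ ht =>
        max_eq_right ht.le
    rw [max_eq_right hlt.le]
    have hmax' := fun {S : Set ℝ} => hmax.filter_mono (nhdsWithin_le_nhds (s := S))
    exact ⟨Rg, Lg, hLRg, (hRg.and hmax').mono fun _ h => h.2.trans h.1,
      (hLg.and hmax').mono fun _ h => h.2.trans h.1⟩
  obtain ⟨Rf, Lf, hLRf, hRf, hLf⟩ := (isTropEntire_iff.1 hf).2 x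
  refine ⟨max Rf Rg, min Lf Lg, (min_le_left _ _).trans (hLRf.trans (le_max_left _ _)), ?_, ?_⟩
  · filter_upwards [hRf, hRg, self_mem_nhdsWithin] with t h1 h2 (ht : x ≤ t)
    rw [h1, h2, heq, max_self, max_add_add_left, max_mul_of_nonneg _ _ (sub_nonneg.2 ht)]
  · filter_upwards [hLf, hLg, self_mem_nhdsWithin] with t h1 h2 (ht : t ≤ x)
    have hd : t - x ≤ 0 := sub_nonpos.2 ht
    rw [h1, h2, heq, max_self, max_add_add_left]
    rcases le_total Lf Lg with hl | hl
    · rw [min_eq_left hl, max_eq_left (mul_le_mul_of_nonpos_right hl hd)]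
    · rw [min_eq_right hl, max_eq_right (mul_le_mul_of_nonpos_right hl hd)]

lemma exists_omega_max_pos {f0 f1 : ℝ → ℝ} (hf0 : IsTropEntire f0) (hf1 : IsTropEntire f1)
    (hnc : ¬ ∃ k : ℝ, ∀ x, f1 x - f0 x = k) : ∃ b, 0 < omega (fun x => max (f0 x) (f1 x)) b := by
  set M := fun x => max (f0 x) (f1 x)
  have hM : IsTropEntire M := isTropEntire_max hf0 hf1
  by_contra! hω
  have hshift : ∀ p, IsTropEntire p → (∀ x, p x ≤ M x) → ∀ x, p x - M x = p 0 - M 0 := by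
    intro p hp hpM
    have he : IsTropEntire (p - M) := ⟨tropMero.sub_mem hp.1 hM.1, fun x => by
      rw [omega_sub hp.1 hM.1]
      linarith [hp.2 x, hω x]⟩
    exact he.eq_const_of_le fun x => sub_nonpos.2 (hpM x)
  refine hnc ⟨(f1 0 - M 0) - (f0 0 - M 0), fun x => ?_⟩
  linarith [hshift f0 hf0 (fun x => le_max_left _ _) x, hshift f1 hf1 (fun x => le_max_right _ _) x]

lemma abs_charT2_sub_countNroots_le {f0 f1 : ℝ → ℝ} (hf0 : IsTropEntire f0)
    (hf1 : IsTropEntire f1) (c : ℝ) {r : ℝ} (hr : 0 < r) :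
    |charT2 f0 f1 r - countNroots (fun x => max (c + f0 x) (f1 x)) r| ≤ 2 * |c| := by
  rw [(isTropEntire_max (hf0.const_add c) hf1).countNroots_eq hr, charT2]
  have hshift : ∀ x, |max (c + f0 x) (f1 x) - max (f0 x) (f1 x)| ≤ |c| := fun x => by
    simpa using abs_max_sub_max_le_abs (c + f0 x) (f0 x) (f1 x)
  have h1 := abs_le.1 (hshift r)
  have h2 := abs_le.1 (hshift (-r))
  have h3 := abs_le.1 (hshift 0)
  rw [abs_le]
  constructor <;> linarith [h1.1, h1.2, h2.1, h2.2, h3.1, h3.2]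

lemma limsupZero_of_tendsto {φ : ℝ → ℝ} (hφ : Tendsto φ atTop (𝓝 0)) : LimsupZero φ :=
  ⟨fun _ hε => hφ.eventually (gt_mem_nhds hε),
    fun _ hε => (hφ.eventually (lt_mem_nhds (neg_lt_zero.2 hε))).frequently⟩

lemma zeroUpperDensity_of_bddAbove {E : Set ℝ} (hE : BddAbove E) : ZeroUpperDensity E := by
  obtain ⟨R, hR⟩ := hE
  refine limsupZero_of_tendsto (tendsto_of_tendsto_of_tendsto_of_le_of_le' tendsto_const_nhds
    ((tendsto_const_nhds (x := (volume (Icc 1 R)).toReal)).div_atTop tendsto_id) ?_ ?_)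
  · filter_upwards [eventually_gt_atTop 0] with r hr
    positivity
  · filter_upwards [eventually_gt_atTop 0] with r hr
    rw [id]
    gcongr
    · exact measure_Icc_lt_top.ne
    · exact fun x hx => ⟨hx.2.1, hR hx.1⟩

lemma exists_le_mul_of_bounded_of_tendsto_atTop {T D : ℝ → ℝ} {C : ℝ}
    (hT : Tendsto T atTop atTop) (hD : ∀ᶠ r in atTop, |D r| ≤ C) :
    ∃ (E : Set ℝ) (ε : ℝ → ℝ), ZeroUpperDensity E ∧ Tendsto ε (atTop ⊓ 𝓟 Eᶜ) (𝓝 0) ∧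
      ∀ r, r ∉ E → |D r| ≤ ε r * T r := by
  obtain ⟨R, hR⟩ := ((hT.eventually_gt_atTop 0).and hD).exists_forall_of_atTop
  refine ⟨Iio R, fun r => C / T r, zeroUpperDensity_of_bddAbove bddAbove_Iio,
    (tendsto_const_nhds.div_atTop hT).mono_left inf_le_left, fun r hr => ?_⟩
  obtain ⟨hTr, hDr⟩ := hR r (not_lt.1 hr)
  rwa [div_mul_cancel₀ _ hTr.ne']

end TropNev

theorem stmt15_general {q : ℕ}
    (f0 f1 : ℝ → ℝ) (hred : ReducedPair f0 f1)
    (f : ℝ → ℝ) (hfdef : f = fun x => f1 x - f0 x)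
    (hnc : ¬ ∃ k : ℝ, ∀ x : ℝ, f x = k)
    (a : Fin q → ℝ) :
    ∃ (E : Set ℝ) (ε : ℝ → ℝ), ZeroUpperDensity E ∧
      Filter.Tendsto ε (Filter.atTop ⊓ Filter.principal Eᶜ) (nhds 0) ∧
      ∀ r : ℝ, r ∉ E →
        |(q : ℝ) * charT2 f0 f1 r -
            ∑ j : Fin q, countNroots (fun x => max (a j + f0 x) (f1 x)) r|
          ≤ ε r * charT2 f0 f1 r := by
  obtain ⟨hf0, hf1, -⟩ := hred
  subst hfdef
  have hM := isTropEntire_max hf0 hf1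
  obtain ⟨b, hb⟩ := exists_omega_max_pos hf0 hf1 hnc
  refine exists_le_mul_of_bounded_of_tendsto_atTop (C := ∑ j, 2 * |a j|) ?_ ?_
  · refine (hM.tendsto_countNroots_atTop hb).congr' ?_
    filter_upwards [eventually_gt_atTop 0] with r hr
    exact hM.countNroots_eq hr
  · filter_upwards [eventually_gt_atTop 0] with r hr
    calc |(q : ℝ) * charT2 f0 f1 r - ∑ j, countNroots (fun x => max (a j + f0 x) (f1 x)) r|
        = |∑ j, (charT2 f0 f1 r - countNroots (fun x => max (a j + f0 x) (f1 x)) r)| := by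
          simp [Finset.sum_sub_distrib]
      _ ≤ ∑ j, |charT2 f0 f1 r - countNroots (fun x => max (a j + f0 x) (f1 x)) r| :=
          Finset.abs_sum_le_sum_abs _ _
      _ ≤ ∑ j, 2 * |a j| :=
          Finset.sum_le_sum fun j _ => abs_charT2_sub_countNroots_le hf0 hf1 (a j) hr

/-- tropical Nevanlinna second main theorem, equality form. -/
theorem stmt15 {q : ℕ} (hq : 1 ≤ q)
    (f0 f1 : ℝ → ℝ) (hred : ReducedPair f0 f1)
    (f : ℝ → ℝ) (hfdef : f = fun x => f1 x - f0 x)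
    (hnc : ¬ ∃ k : ℝ, ∀ x : ℝ, f x = k)
    (hgrow : LimsupZero fun r => Real.log (charT2 f0 f1 r) / r)
    (a : Fin q → ℝ) (hdist : Function.Injective a)
    (ha : ∀ j : Fin q, ¬ ∀ x : ℝ, max (f x) (a j) = a j) :
    ∃ (E : Set ℝ) (ε : ℝ → ℝ), ZeroUpperDensity E ∧
      Filter.Tendsto ε (Filter.atTop ⊓ Filter.principal Eᶜ) (nhds 0) ∧
      ∀ r : ℝ, r ∉ E →
        |(q : ℝ) * charT2 f0 f1 r -
            ∑ j : Fin q, countNroots (fun x => max (a j + f0 x) (f1 x)) r|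
          ≤ ε r * charT2 f0 f1 r :=
  stmt15_general f0 f1 hred f hfdef hnc a
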